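/- arXiv:2007.15552 — 3 statements merged into one kernel-verified Lean document; each statement's English description precedes it below -/
import Mathlib

section
/- Let T^1 = KR_right(S,A)^1 be the right Karnofsky–Rhodes expansion of (S,A) with identity adjoined, and let φ: T^1 → S^1 be the canonical surjective homomorphism. If t, t' ∈ T^1 satisfy φ(t t' t) = φ(t), then t t' t = t. -/
open scoped Classical

namespace KRHolonomy

/-- Green's quasi-order `≤_J` on a monoid: `a ≤_J b` iff `a ∈ M b M`. -/
def leJ {M : Type*} [Monoid M] (a b : M) : Prop := ∃ x y : M, a = x * b * y

/-- `a <_J b` iff `a ≤_J b` and not `b ≤_J a`. -/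
def ltJ {M : Type*} [Monoid M] (a b : M) : Prop := leJ a b ∧ ¬ leJ b a

/-- Green's quasi-order `≤_R` on a monoid: `a ≤_R b` iff `a ∈ b M`. -/
def leR {M : Type*} [Monoid M] (a b : M) : Prop := ∃ x : M, a = b * x

/-- `a <_R b` iff `a ≤_R b` and not `b ≤_R a`. -/
def ltR {M : Type*} [Monoid M] (a b : M) : Prop := leR a b ∧ ¬ leR b a

/-- Green's quasi-order `≤_L` on a monoid: `a ≤_L b` iff `a ∈ M b`. -/
def leL {M : Type*} [Monoid M] (a b : M) : Prop := ∃ x : M, a = x * b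

/-- `a <_L b` iff `a ≤_L b` and not `b ≤_L a`. -/
def ltL {M : Type*} [Monoid M] (a b : M) : Prop := leL a b ∧ ¬ leL b a

/-- The Dedekind height function: `height x` is the largest `k` such that there is a chain
`x₀ >_J x₁ >_J ⋯ >_J x_k = x`. -/
noncomputable def height {M : Type*} [Monoid M] (x : M) : ℕ :=
  sSup {k | ∃ c : ℕ → M, c k = x ∧ ∀ i < k, ltJ (c (i + 1)) (c i)}

variable {A S : Type*} [Semigroup S]

/-- The edge `(s, a, s·θ(a))` of the right Cayley graph of `(S,A)` is a transition edge:
there is no path in the right Cayley graph from `s·θ(a)` back to `s`. -/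
def IsTransitionEdge (θ : FreeMonoid A →* WithOne S) (s : WithOne S) (a : A) : Prop :=
  ¬ ∃ w : FreeMonoid A, s * θ (FreeMonoid.of a) * θ w = s

/-- The (ordered) sequence of transition edges along the path of the right Cayley graph
starting at `s` and reading the word `u`; an edge is recorded as a pair (source, label). -/
noncomputable def transEdgesFrom (θ : FreeMonoid A →* WithOne S) :
    WithOne S → List A → List (WithOne S × A)
  | _, [] => []
  | s, a :: w =>
      (if IsTransitionEdge θ s a then [(s, a)] else []) ++
        transEdgesFrom θ (s * θ (FreeMonoid.of a)) w

/-- The sequence of transition edges of the path starting at `1` reading `u`. -/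
noncomputable def transEdges (θ : FreeMonoid A →* WithOne S) (u : FreeMonoid A) :
    List (WithOne S × A) :=
  transEdgesFrom θ 1 (FreeMonoid.toList u)

/-- The congruence (`τ_r`, together with `(1,1)`) defining the right Karnofsky–Rhodes
expansion: two words of `A^*` represent the same element of `KR_right(S,A)¹` iff they are
both empty or both nonempty, they have the same image in `S¹` and the same sequence of
transition edges. -/
def KRrel (θ : FreeMonoid A →* WithOne S) (u v : FreeMonoid A) : Prop :=
  (u = 1 ∧ v = 1) ∨
    (u ≠ 1 ∧ v ≠ 1 ∧ θ u = θ v ∧ transEdges θ u = transEdges θ v)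

/-- Green's quasi-order `≤_J` on `T¹ = KR_right(S,A)¹`, expressed on word representatives:
`u ≤_J v` iff `u = p v q` holds in `T¹` for some `p, q ∈ T¹`. -/
def leJT (θ : FreeMonoid A →* WithOne S) (u v : FreeMonoid A) : Prop :=
  ∃ p q : FreeMonoid A, KRrel θ u (p * v * q)

/-- `<_J` on `T¹ = KR_right(S,A)¹`, expressed on word representatives. -/
def ltJT (θ : FreeMonoid A →* WithOne S) (u v : FreeMonoid A) : Prop :=
  leJT θ u v ∧ ¬ leJT θ v u

/-- The Dedekind height function on `T¹ = KR_right(S,A)¹`, expressed on word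
representatives: the largest `k` such that there is a chain
`t₀ >_J t₁ >_J ⋯ >_J t_k = t` in `T¹`. -/
noncomputable def heightT (θ : FreeMonoid A →* WithOne S) (u : FreeMonoid A) : ℕ :=
  sSup {k | ∃ c : ℕ → FreeMonoid A, KRrel θ (c k) u ∧ ∀ i < k, ltJT θ (c (i + 1)) (c i)}

/-- `ℓ = 2 · max { h(s) : s ∈ S¹ }`. -/
noncomputable def ell (S : Type*) [Semigroup S] : ℕ :=
  2 * sSup (Set.range fun s : WithOne S => height s)

/-- `ξ(u,v)`: the largest `i` (with `0 ≤ i ≤ m`, `m` the number of transition edges of `u`)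
such that the first `i` transition edges of `u` and of `v` agree. -/
noncomputable def xi (θ : FreeMonoid A →* WithOne S) (u v : FreeMonoid A) : ℕ :=
  sSup {i | i ≤ (transEdges θ u).length ∧
    (transEdges θ u).take i = (transEdges θ v).take i}

/-- The endpoint of an edge `(s, a)` of the right Cayley graph, namely `s·θ(a)`. -/
def edgeEnd (θ : FreeMonoid A →* WithOne S) (e : WithOne S × A) : WithOne S :=
  e.1 * θ (FreeMonoid.of e.2)

/-- The Lyndon–Chiswell length function `D` on `T¹ = KR_right(S,A)¹`, expressed on word
representatives.  With `k = ξ(u,v)` (and indexing the transition edges from `1` as in the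
paper, so that `E_k` sits at list index `k-1`):
`D(u,v) = ℓ` if `u = v` in `T¹`; `D(u,v) = 0` if `u ≠ v` in `T¹` and `k = 0`;
`D(u,v) = 2·h(end(E_k))` if `k > 0`, `E_{k+1}` and `E'_{k+1}` both exist and have the same
endpoint; and `D(u,v) = 2·h(end(E_k)) - 1` in all remaining cases. -/
noncomputable def lcD (θ : FreeMonoid A →* WithOne S) (u v : FreeMonoid A) : ℕ :=
  if KRrel θ u v then ell S
  else if xi θ u v = 0 then 0
  else
    let k := xi θ u v
    let base := (transEdges θ u)[k - 1]?.elim 0 fun e => height (edgeEnd θ e)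
    if ∃ e e', (transEdges θ u)[k]? = some e ∧ (transEdges θ v)[k]? = some e' ∧
        edgeEnd θ e = edgeEnd θ e'
    then 2 * base
    else 2 * base - 1

/-- The relation `∼` on `C = {(k,α) : 0 ≤ k ≤ ℓ, α ∈ T¹}`:
`(k,α) ∼ (k',β)` iff `k = k'` and `D(α,β) ≥ k`. -/
def simRel (θ : FreeMonoid A →* WithOne S)
    (p q : {p : ℕ × FreeMonoid A // p.1 ≤ ell S}) : Prop :=
  p.val.1 = q.val.1 ∧ lcD θ p.val.2 q.val.2 ≥ p.val.1

/-- The vertex set of the Chiswell tree: `∼`-classes `[k,α]`. -/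
def CVert (θ : FreeMonoid A →* WithOne S) : Type _ := Quot (simRel θ)

/-- The edge relation of the Chiswell graph: the edges are `[k,α] — [k+1,α]`
for `0 ≤ k < ℓ` and `α ∈ T¹`. -/
def edgeRel (θ : FreeMonoid A →* WithOne S) (v w : CVert θ) : Prop :=
  ∃ (k : ℕ) (α : FreeMonoid A) (hk : k + 1 ≤ ell S),
    v = Quot.mk (simRel θ) ⟨(k, α), Nat.le_of_succ_le hk⟩ ∧
    w = Quot.mk (simRel θ) ⟨(k + 1, α), hk⟩

/-- The Chiswell graph `𝒞`. -/
def CGraph (θ : FreeMonoid A →* WithOne S) : SimpleGraph (CVert θ) :=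
  SimpleGraph.fromRel (edgeRel θ)

/-- The depth function of the Chiswell tree: `δ([k,α]) = k`. -/
def depth (θ : FreeMonoid A →* WithOne S) : CVert θ → ℕ :=
  Quot.lift (fun p => p.val.1) (fun _ _ h => h.1)

end KRHolonomy

section Aux

open KRHolonomy

variable {A S : Type*} [Semigroup S]

theorem transEdgesFrom_append (θ : FreeMonoid A →* WithOne S) :
    ∀ (l₁ l₂ : List A) (s : WithOne S),
      transEdgesFrom θ s (l₁ ++ l₂) =
        transEdgesFrom θ s l₁ ++ transEdgesFrom θ (s * θ (FreeMonoid.ofList l₁)) l₂ := by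
  intro l₁
  induction l₁ with
  | nil =>
      intro l₂ s
      simp [transEdgesFrom, show (FreeMonoid.ofList ([] : List A)) = 1 from rfl]
  | cons a l ih =>
      intro l₂ s
      have hof : θ (FreeMonoid.ofList (a :: l)) =
          θ (FreeMonoid.of a) * θ (FreeMonoid.ofList l) := by
        rw [← map_mul]
        rfl
      simp only [List.cons_append, transEdgesFrom, List.append_eq, ih, hof, List.append_assoc, mul_assoc]

theorem transEdgesFrom_eq_nil (θ : FreeMonoid A →* WithOne S) :
    ∀ (l : List A) (s : WithOne S),
      (∃ w : FreeMonoid A, s * θ (FreeMonoid.ofList l) * θ w = s) →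
      transEdgesFrom θ s l = [] := by
  intro l
  induction l with
  | nil => intro s _; rfl
  | cons a l ih =>
      intro s ⟨w, hw⟩
      have hof : θ (FreeMonoid.ofList (a :: l)) =
          θ (FreeMonoid.of a) * θ (FreeMonoid.ofList l) := by
        rw [← map_mul]
        rfl
      rw [hof] at hw
      have hnt : ¬ IsTransitionEdge θ s a := by
        intro hcon
        exact hcon ⟨FreeMonoid.ofList l * w, by
          rw [map_mul]
          calc s * θ (FreeMonoid.of a) * (θ (FreeMonoid.ofList l) * θ w)
              = s * (θ (FreeMonoid.of a) * θ (FreeMonoid.ofList l)) * θ w := by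
                rw [mul_assoc, mul_assoc, mul_assoc]
            _ = s := hw⟩
      have hrec : transEdgesFrom θ (s * θ (FreeMonoid.of a)) l = [] := by
        refine ih _ ⟨w * FreeMonoid.of a, ?_⟩
        rw [map_mul]
        calc s * θ (FreeMonoid.of a) * θ (FreeMonoid.ofList l) * (θ w * θ (FreeMonoid.of a))
            = (s * (θ (FreeMonoid.of a) * θ (FreeMonoid.ofList l)) * θ w) *
                θ (FreeMonoid.of a) := by
              simp [mul_assoc]
          _ = s * θ (FreeMonoid.of a) := by rw [hw]
      simp [transEdgesFrom, hnt, hrec]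

end Aux

open KRHolonomy in
/-- Let `T¹ = KR_right(S,A)¹` and `φ : T¹ → S¹` the canonical surmorphism.
If `t, t' ∈ T¹` satisfy `φ(t t' t) = φ(t)`, then `t t' t = t`.  On word representatives
(`u` for `t`, `v` for `t'`): if `θ(u v u) = θ(u)` then `u v u = u` holds in `T¹`. -/
theorem kr_pullreg {A S : Type*} [Finite A] [Semigroup S] [Finite S]
    (θ : FreeMonoid A →* WithOne S)
    (hgen : ∀ s : S, ∃ u : FreeMonoid A, θ u = (s : WithOne S))
    (hproper : ∀ u : FreeMonoid A, θ u = 1 → u = 1)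
    (u v : FreeMonoid A) (h : θ (u * v * u) = θ u) :
    KRrel θ (u * v * u) u := by
  by_cases hu : u = 1
  · left
    subst hu
    have hv : v = 1 := hproper v (by simpa using h)
    simp [hv]
  · right
    refine ⟨?_, hu, h, ?_⟩
    · intro hcon
      apply hu
      apply hproper
      rw [← h, hcon, map_one]
    · have hmul : u * v * u = u * (v * u) := by rw [mul_assoc]
      have htl : FreeMonoid.toList (u * v * u) =
          FreeMonoid.toList u ++ FreeMonoid.toList (v * u) := by
        rw [hmul, FreeMonoid.toList_mul]
      unfold transEdges
      rw [htl, transEdgesFrom_append θ]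
      have hnil : transEdgesFrom θ (1 * θ (FreeMonoid.ofList (FreeMonoid.toList u)))
          (FreeMonoid.toList (v * u)) = [] := by
        apply transEdgesFrom_eq_nil θ
        refine ⟨1, ?_⟩
        rw [map_one, mul_one, FreeMonoid.ofList_toList, FreeMonoid.ofList_toList,
          one_mul, ← map_mul, ← hmul, h]
      rw [hnil, List.append_nil]
end

section
/- Assume S is a finite regular semigroup generated by the finite alphabet A. Let T^1 = KR_right(S,A)^1 and φ: T^1 → S^1 the canonical surjective homomorphism. Then for every t ∈ T^1, the Dedekind height of t computed in T^1 equals the Dedekind height of φ(t) computed in S^1, i.e., h_T(t) = h_S(φ(t)). -/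
open scoped Classical

namespace KRHolonomy

variable {A S : Type*} [Semigroup S]

/-! ### Auxiliary development for the proof -/

section JGeneral
variable {M : Type*} [Monoid M]

theorem leJ_refl' (a : M) : leJ a a := ⟨1, 1, by simp⟩

theorem leJ_trans' {a b c : M} (h1 : leJ a b) (h2 : leJ b c) : leJ a c := by
  obtain ⟨x, y, h1⟩ := h1; obtain ⟨x', y', h2⟩ := h2
  exact ⟨x * x', y' * y, by rw [h1, h2]; simp [mul_assoc]⟩

theorem chain_leJ {k : ℕ} {c : ℕ → M} (hc : ∀ i < k, ltJ (c (i+1)) (c i)) :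
    ∀ i j : ℕ, i ≤ j → j ≤ k → leJ (c j) (c i) := by
  intro i j hij
  induction j, hij using Nat.le_induction with
  | base => intro _; exact leJ_refl' _
  | succ n hn ih => intro hnk; exact leJ_trans' ((hc n (by omega)).1) (ih (by omega))

theorem chain_bound [Finite M] {k : ℕ} {c : ℕ → M} (hc : ∀ i < k, ltJ (c (i+1)) (c i)) :
    k ≤ Nat.card M := by
  have hinj : Function.Injective (fun i : Fin (k+1) => c i) := by
    intro i j hij
    simp only at hij
    rcases lt_trichotomy (i : ℕ) (j : ℕ) with h | h | h
    · exact absurd (hij ▸ chain_leJ hc ((i:ℕ)+1) j (by omega) (by omega))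
        (hc i (by omega)).2
    · exact Fin.ext h
    · exact absurd (hij ▸ chain_leJ hc ((j:ℕ)+1) i (by omega) (by omega))
        (hc j (by omega)).2
  calc k ≤ Nat.card (Fin (k+1)) := by simp
  _ ≤ Nat.card M := Nat.card_le_card_of_injective _ hinj

def JSet (x : M) : Set ℕ := {k | ∃ c : ℕ → M, c k = x ∧ ∀ i < k, ltJ (c (i + 1)) (c i)}

theorem height_eq_sSup (x : M) : height x = sSup (JSet x) := rfl

theorem JSet_zero (x : M) : 0 ∈ JSet x := ⟨fun _ => x, rfl, by omega⟩

theorem JSet_bdd [Finite M] (x : M) : BddAbove (JSet x) :=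
  ⟨Nat.card M, fun k hk => by obtain ⟨c, _, hc⟩ := hk; exact chain_bound hc⟩

theorem le_height [Finite M] {x : M} {k : ℕ} (h : k ∈ JSet x) : k ≤ height x :=
  le_csSup (JSet_bdd x) h

theorem height_mem [Finite M] (x : M) : height x ∈ JSet x :=
  Nat.sSup_mem ⟨0, JSet_zero x⟩ (JSet_bdd x)

theorem height_le_of_leJ [Finite M] {x y : M} (h : leJ x y) : height y ≤ height x := by
  obtain ⟨c, hck, hc⟩ := height_mem y
  apply le_height
  refine ⟨fun i => if i = height y then x else c i, by simp, ?_⟩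
  intro i hi
  have hi' : i ≠ height y := by omega
  by_cases h2 : i + 1 = height y
  · simp only [if_pos h2, if_neg hi']
    have hstep := hc i hi
    rw [h2, hck] at hstep
    exact ⟨leJ_trans' h hstep.1, fun hcon => hstep.2 (leJ_trans' hcon h)⟩
  · simp only [if_neg h2, if_neg hi']
    exact hc i hi

theorem ltJ_height [Finite M] {x y : M} (h : ltJ x y) : height y + 1 ≤ height x := by
  obtain ⟨c, hck, hc⟩ := height_mem y
  apply le_height
  refine ⟨fun i => if i = height y + 1 then x else c i, by simp, ?_⟩
  intro i hi
  by_cases h2 : i = height y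
  · subst h2
    simp only [if_pos rfl, if_neg (by omega : ¬ (height y = height y + 1))]
    rw [hck]; exact h
  · simp only [if_neg (by omega : ¬ (i + 1 = height y + 1)),
      if_neg (by omega : ¬ (i = height y + 1))]
    exact hc i (by omega)

theorem height_eq_of_J [Finite M] {x y : M} (h1 : leJ x y) (h2 : leJ y x) :
    height x = height y :=
  le_antisymm (height_le_of_leJ h2) (height_le_of_leJ h1)

theorem exists_idem_pow [Finite M] (x : M) : ∃ n, 0 < n ∧ x ^ n * x ^ n = x ^ n := by
  obtain ⟨i, j, hne, hij⟩ := Finite.exists_ne_map_eq_of_infinite (fun n : ℕ => x ^ (n + 1))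
  wlog hlt : i < j generalizing i j
  · exact this j i (Ne.symm hne) hij.symm (by omega)
  set a := i + 1 with ha
  set d := j - i with hd
  have hd1 : 1 ≤ d := by omega
  have hpow : x ^ a = x ^ (a + d) := by
    have h1 : j + 1 = a + d := by omega
    rw [← h1]; exact hij
  have step : ∀ s, x ^ (a + d + s) = x ^ (a + s) := by
    intro s; rw [pow_add x (a+d) s, ← hpow, ← pow_add]
  have iter : ∀ m s, x ^ (a + m * d + s) = x ^ (a + s) := by
    intro m
    induction m with
    | zero => simp
    | succ m ih =>
      intro s
      have e1 : a + (m+1) * d + s = a + d + (m * d + s) := by ring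
      rw [e1, step, ← Nat.add_assoc, ih]
  set D := d * (a + 1) with hD
  have hge : a ≤ D := by
    have h1 : a + 1 ≤ d * (a + 1) := Nat.le_mul_of_pos_left _ hd1
    omega
  have hcomm : (a + 1) * d = D := by rw [hD, Nat.mul_comm]
  refine ⟨D, by positivity, ?_⟩
  rw [← pow_add]
  have e2 : D + D = a + (a + 1) * d + (D - a) := by rw [hcomm]; omega
  rw [e2, iter (a+1) (D - a)]
  congr 1; omega

theorem stabR [Finite M] {a b : M} (h : ∃ u v, a = u * (a * b) * v) :
    ∃ z, a * b * z = a := by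
  obtain ⟨u, v, huv⟩ := h
  have h1 : a = u * a * (b * v) := by
    conv_lhs => rw [huv]
    simp only [mul_assoc]
  have key : ∀ n, a = u ^ n * a * (b * v) ^ n := by
    intro n; induction n with
    | zero => simp
    | succ n ih =>
      calc a = u * a * (b * v) := h1
      _ = u * (u ^ n * a * (b * v) ^ n) * (b * v) := by rw [← ih]
      _ = u ^ (n+1) * a * (b * v) ^ (n+1) := by
        rw [pow_succ' u, pow_succ (b*v)]; simp [mul_assoc]
  obtain ⟨n, hn, hidem⟩ := exists_idem_pow (b * v)
  have h2 : a * (b * v) ^ n = a := by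
    conv_lhs => rw [key n]
    rw [mul_assoc (u ^ n * a), hidem, ← key n]
  obtain ⟨m, rfl⟩ : ∃ m, n = m + 1 := ⟨n - 1, by omega⟩
  refine ⟨v * (b * v) ^ m, ?_⟩
  calc a * b * (v * (b * v) ^ m) = a * (b * v) ^ (m + 1) := by
        rw [pow_succ' (b*v)]; simp [mul_assoc]
  _ = a := h2

theorem stabL [Finite M] {a b : M} (h : ∃ u v, a = u * (b * a) * v) :
    ∃ z, z * (b * a) = a := by
  obtain ⟨u, v, huv⟩ := h
  have h1 : a = (u * b) * a * v := by
    conv_lhs => rw [huv]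
    simp only [mul_assoc]
  have key : ∀ n, a = (u * b) ^ n * a * v ^ n := by
    intro n; induction n with
    | zero => simp
    | succ n ih =>
      calc a = (u * b) * a * v := h1
      _ = (u * b) * ((u * b) ^ n * a * v ^ n) * v := by rw [← ih]
      _ = (u * b) ^ (n+1) * a * v ^ (n+1) := by
        rw [pow_succ' (u*b), pow_succ v]; simp [mul_assoc]
  obtain ⟨n, hn, hidem⟩ := exists_idem_pow (u * b)
  have h2 : (u * b) ^ n * a = a := by
    conv_lhs => rw [key n]
    rw [← mul_assoc ((u*b)^n), ← mul_assoc ((u*b)^n), hidem]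
    rw [← key n]
  obtain ⟨m, rfl⟩ : ∃ m, n = m + 1 := ⟨n - 1, by omega⟩
  refine ⟨(u * b) ^ m * u, ?_⟩
  calc (u * b) ^ m * u * (b * a) = (u * b) ^ (m + 1) * a := by
        rw [pow_succ (u*b)]; simp [mul_assoc]
  _ = a := h2

end JGeneral




instance withOneFinite {T : Type*} [Finite T] : Finite (WithOne T) := by
  have : Fintype T := Fintype.ofFinite T
  exact inferInstanceAs (Finite (Option T))

section WithOneFacts
variable {S : Type*} [Semigroup S]

theorem wone_mul_eq_one {x y : WithOne S} (h : x * y = 1) : x = 1 ∧ y = 1 := by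
  by_cases hx : x = 1
  · subst hx; rw [one_mul] at h; exact ⟨rfl, h⟩
  · obtain ⟨a, rfl⟩ := WithOne.ne_one_iff_exists.mp hx
    by_cases hy : y = 1
    · subst hy; rw [mul_one] at h; exact absurd h WithOne.coe_ne_one
    · obtain ⟨b, rfl⟩ := WithOne.ne_one_iff_exists.mp hy
      rw [← WithOne.coe_mul] at h
      exact absurd h WithOne.coe_ne_one

theorem wone_mul3_eq_one {x y z : WithOne S} (h : x * y * z = 1) :
    x = 1 ∧ y = 1 ∧ z = 1 := by
  obtain ⟨h1, h2⟩ := wone_mul_eq_one h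
  obtain ⟨h3, h4⟩ := wone_mul_eq_one h1
  exact ⟨h3, h4, h2⟩

theorem height_one_eq [Finite S] : height (1 : WithOne S) = 0 := by
  by_contra hne
  obtain ⟨c, hck, hc⟩ := height_mem (1 : WithOne S)
  have hk : 0 < height (1 : WithOne S) := Nat.pos_of_ne_zero hne
  have hstep := hc (height (1 : WithOne S) - 1) (by omega)
  rw [show height (1 : WithOne S) - 1 + 1 = height (1 : WithOne S) by omega, hck] at hstep
  obtain ⟨p, q, hpq⟩ := hstep.1
  obtain ⟨_, h2, _⟩ := wone_mul3_eq_one hpq.symm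
  exact hstep.2 (by rw [h2]; exact leJ_refl' (1 : WithOne S))

end WithOneFacts

section Theta
variable {A S : Type*} [Semigroup S] (θ : FreeMonoid A →* WithOne S)

theorem lift_ex (hgen : ∀ s : S, ∃ u : FreeMonoid A, θ u = (s : WithOne S))
    (m : WithOne S) : ∃ w : FreeMonoid A, θ w = m := by
  by_cases hm : m = 1
  · exact ⟨1, by rw [map_one, hm]⟩
  · obtain ⟨a, rfl⟩ := WithOne.ne_one_iff_exists.mp hm; exact hgen a

theorem fm_one_of_toList {u : FreeMonoid A} (h : FreeMonoid.toList u = []) : u = 1 := by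
  have := congrArg FreeMonoid.ofList h
  rwa [FreeMonoid.ofList_toList, FreeMonoid.ofList_nil] at this

theorem fm_mul_eq_one {u v : FreeMonoid A} (h : u * v = 1) : u = 1 ∧ v = 1 := by
  have h' := congrArg FreeMonoid.toList h
  rw [FreeMonoid.toList_mul, FreeMonoid.toList_one] at h'
  obtain ⟨h1, h2⟩ := List.append_eq_nil_iff.mp h'
  exact ⟨fm_one_of_toList h1, fm_one_of_toList h2⟩

theorem fm_mul3_ne_one {u : FreeMonoid A} (hu : u ≠ 1) (p q : FreeMonoid A) :
    p * u * q ≠ 1 := by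
  intro h
  obtain ⟨h1, _⟩ := fm_mul_eq_one h
  exact hu (fm_mul_eq_one h1).2

theorem theta_ofList_cons (a : A) (l : List A) :
    θ (FreeMonoid.ofList (a :: l)) = θ (FreeMonoid.of a) * θ (FreeMonoid.ofList l) := by
  rw [show FreeMonoid.ofList (a :: l) = FreeMonoid.of a * FreeMonoid.ofList l from rfl,
    map_mul]

theorem not_trans_iff (hgen : ∀ s : S, ∃ u : FreeMonoid A, θ u = (s : WithOne S))
    (s : WithOne S) (a : A) :
    ¬ IsTransitionEdge θ s a ↔ leR s (s * θ (FreeMonoid.of a)) := by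
  unfold IsTransitionEdge
  rw [not_not]
  constructor
  · rintro ⟨w, hw⟩; exact ⟨θ w, hw.symm⟩
  · rintro ⟨x, hx⟩
    obtain ⟨w, hw⟩ := lift_ex θ hgen x
    exact ⟨w, by rw [hw, ← hx]⟩

theorem TEF_nil (t : WithOne S) : transEdgesFrom θ t [] = [] := rfl

theorem TEF_cons (t : WithOne S) (a : A) (l : List A) :
    transEdgesFrom θ t (a :: l) =
      (if IsTransitionEdge θ t a then [(t, a)] else []) ++
        transEdgesFrom θ (t * θ (FreeMonoid.of a)) l := rfl

theorem TEF_eq_nil_of_leR (hgen : ∀ s : S, ∃ u : FreeMonoid A, θ u = (s : WithOne S)) :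
    ∀ (l : List A) (t : WithOne S),
      leR t (t * θ (FreeMonoid.ofList l)) → transEdgesFrom θ t l = [] := by
  intro l
  induction l with
  | nil => intro t _; rfl
  | cons a l ih =>
    intro t ht
    obtain ⟨x, hx⟩ := ht
    rw [theta_ofList_cons] at hx
    have h1 : ¬ IsTransitionEdge θ t a := by
      rw [not_trans_iff θ hgen]
      refine ⟨θ (FreeMonoid.ofList l) * x, ?_⟩
      conv_lhs => rw [hx]
      simp [mul_assoc]
    have h2 : transEdgesFrom θ (t * θ (FreeMonoid.of a)) l = [] := by
      apply ih
      refine ⟨x * θ (FreeMonoid.of a), ?_⟩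
      conv_lhs => rw [hx]
      simp [mul_assoc]
    rw [TEF_cons, if_neg h1, h2]
    rfl

theorem TEF_append : ∀ (l1 l2 : List A) (t : WithOne S),
    transEdgesFrom θ t (l1 ++ l2) =
      transEdgesFrom θ t l1 ++ transEdgesFrom θ (t * θ (FreeMonoid.ofList l1)) l2 := by
  intro l1
  induction l1 with
  | nil => intro l2 t; simp [TEF_nil, FreeMonoid.ofList_nil]
  | cons a l ih =>
    intro l2 t
    rw [List.cons_append, TEF_cons, TEF_cons, ih, List.append_assoc]
    rw [theta_ofList_cons, ← mul_assoc]

theorem TEF_mul_left (hgen : ∀ s : S, ∃ u : FreeMonoid A, θ u = (s : WithOne S)) :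
    ∀ (l : List A) (r t : WithOne S),
    transEdgesFrom θ (t * r) l = (transEdgesFrom θ r l).filterMap
      (fun e => if IsTransitionEdge θ (t * e.1) e.2 then some (t * e.1, e.2) else none) := by
  intro l
  induction l with
  | nil => intro r t; rfl
  | cons a l ih =>
    intro r t
    by_cases hr : IsTransitionEdge θ r a
    · rw [TEF_cons, TEF_cons, if_pos hr]
      rw [List.filterMap_append]
      congr 1
      · simp only [List.filterMap_cons, List.filterMap_nil]
        by_cases h2 : IsTransitionEdge θ (t * r) a
        · rw [if_pos h2, if_pos h2]
        · rw [if_neg h2, if_neg h2]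
      · rw [mul_assoc]
        exact ih (r * θ (FreeMonoid.of a)) t
    · have h2 : ¬ IsTransitionEdge θ (t * r) a := by
        rw [not_trans_iff θ hgen] at hr ⊢
        obtain ⟨x, hx⟩ := hr
        refine ⟨x, ?_⟩
        conv_lhs => rw [hx]
        simp [mul_assoc]
      rw [TEF_cons, TEF_cons, if_neg hr, if_neg h2]
      simp only [List.nil_append]
      rw [mul_assoc]
      exact ih (r * θ (FreeMonoid.of a)) t

theorem tE_mul (u v : FreeMonoid A) :
    transEdges θ (u * v) =
      transEdges θ u ++ transEdgesFrom θ (θ u) (FreeMonoid.toList v) := by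
  unfold transEdges
  rw [show FreeMonoid.toList (u * v) = FreeMonoid.toList u ++ FreeMonoid.toList v from rfl,
    TEF_append]
  rw [FreeMonoid.ofList_toList, one_mul]

theorem TEF_congr (hgen : ∀ s : S, ∃ u : FreeMonoid A, θ u = (s : WithOne S))
    {u v : FreeMonoid A} (hE : transEdges θ u = transEdges θ v) (t : WithOne S) :
    transEdgesFrom θ t (FreeMonoid.toList u) = transEdgesFrom θ t (FreeMonoid.toList v) := by
  have h1 := TEF_mul_left θ hgen (FreeMonoid.toList u) 1 t
  have h2 := TEF_mul_left θ hgen (FreeMonoid.toList v) 1 t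
  rw [mul_one] at h1 h2
  rw [h1, h2]
  unfold transEdges at hE
  rw [hE]

theorem KRrel_refl (u : FreeMonoid A) : KRrel θ u u := by
  by_cases hu : u = 1
  · exact Or.inl ⟨hu, hu⟩
  · exact Or.inr ⟨hu, hu, rfl, rfl⟩

theorem KRrel_symm {u v : FreeMonoid A} (h : KRrel θ u v) : KRrel θ v u := by
  rcases h with ⟨h1, h2⟩ | ⟨h1, h2, h3, h4⟩
  · exact Or.inl ⟨h2, h1⟩
  · exact Or.inr ⟨h2, h1, h3.symm, h4.symm⟩

theorem KRrel_trans {u v w : FreeMonoid A} (h1 : KRrel θ u v) (h2 : KRrel θ v w) :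
    KRrel θ u w := by
  rcases h1 with ⟨ha, hb⟩ | ⟨ha, hb, hc, hd⟩
  · rcases h2 with ⟨he, hf⟩ | ⟨he, _, _, _⟩
    · exact Or.inl ⟨ha, hf⟩
    · exact absurd hb he
  · rcases h2 with ⟨he, hf⟩ | ⟨_, hf, hg, hh⟩
    · exact absurd he hb
    · exact Or.inr ⟨ha, hf, hc.trans hg, hd.trans hh⟩

theorem KRrel_theta {u v : FreeMonoid A} (h : KRrel θ u v) : θ u = θ v := by
  rcases h with ⟨h1, h2⟩ | ⟨_, _, h3, _⟩
  · rw [h1, h2]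
  · exact h3

theorem KRrel_mul (hgen : ∀ s : S, ∃ u : FreeMonoid A, θ u = (s : WithOne S))
    {u v : FreeMonoid A} (p q : FreeMonoid A) (h : KRrel θ u v) :
    KRrel θ (p * u * q) (p * v * q) := by
  rcases h with ⟨h1, h2⟩ | ⟨h1, h2, h3, h4⟩
  · subst h1; subst h2; exact KRrel_refl θ _
  · refine Or.inr ⟨fm_mul3_ne_one h1 p q, fm_mul3_ne_one h2 p q, ?_, ?_⟩
    · simp only [map_mul, h3]
    · rw [tE_mul, tE_mul, tE_mul, tE_mul]
      rw [TEF_congr θ hgen h4, map_mul, map_mul, h3]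

theorem leJT_refl (u : FreeMonoid A) : leJT θ u u :=
  ⟨1, 1, by rw [one_mul, mul_one]; exact KRrel_refl θ u⟩

theorem leJT_theta {u v : FreeMonoid A} (h : leJT θ u v) : leJ (θ u) (θ v) := by
  obtain ⟨p, q, hpq⟩ := h
  rcases hpq with ⟨h2, h3⟩ | ⟨_, _, h3, _⟩
  · have hv : v = 1 := by
      obtain ⟨hpv, _⟩ := fm_mul_eq_one h3
      exact (fm_mul_eq_one hpv).2
    rw [h2, hv]
    exact leJ_refl' _
  · exact ⟨θ p, θ q, by rw [h3, map_mul, map_mul]⟩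

theorem leJT_krrel_left {u u' v : FreeMonoid A} (h : KRrel θ u u') (h2 : leJT θ u' v) :
    leJT θ u v := by
  obtain ⟨p, q, hpq⟩ := h2
  exact ⟨p, q, KRrel_trans θ h hpq⟩

theorem leJT_krrel_right (hgen : ∀ s : S, ∃ u : FreeMonoid A, θ u = (s : WithOne S))
    {u v v' : FreeMonoid A} (h2 : leJT θ u v) (h : KRrel θ v v') : leJT θ u v' := by
  obtain ⟨p, q, hpq⟩ := h2
  exact ⟨p, q, KRrel_trans θ hpq (KRrel_mul θ hgen p q h)⟩

end Theta

section Main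
variable {A S : Type*} [Semigroup S] [Finite S] (θ : FreeMonoid A →* WithOne S)

theorem leJT_flip
    (hgen : ∀ s : S, ∃ u : FreeMonoid A, θ u = (s : WithOne S))
    (hproper : ∀ u : FreeMonoid A, θ u = 1 → u = 1)
    (hreg : ∀ s : S, ∃ t : S, s * t * s = s)
    {v w : FreeMonoid A} (h1 : leJT θ v w) (h2 : leJ (θ w) (θ v)) : leJT θ w v := by
  obtain ⟨p, q, hpq⟩ := h1
  rcases hpq with ⟨hv1, hpwq1⟩ | ⟨hv1, hpwq1, hθ, hE⟩
  · have hw : w = 1 := (fm_mul_eq_one (fm_mul_eq_one hpwq1).1).2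
    rw [hv1, hw]
    exact leJT_refl θ 1
  · by_cases hw1 : w = 1
    · exfalso
      rw [hw1, map_one] at h2
      obtain ⟨xx, yy, hxy⟩ := h2
      obtain ⟨_, h3, _⟩ := wone_mul3_eq_one hxy.symm
      exact hv1 (hproper v h3)
    have hvθ : θ v ≠ 1 := fun hcon => hv1 (hproper v hcon)
    obtain ⟨v₀, hv₀⟩ := WithOne.ne_one_iff_exists.mp hvθ
    obtain ⟨v₁, hv₁⟩ := hreg v₀
    obtain ⟨γ, δ, hγδ⟩ := h2
    have hx : θ v = θ p * θ w * θ q := by rw [hθ, map_mul, map_mul]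
    set x : WithOne S := θ v with hxdef
    set y : WithOne S := θ w with hydef
    set α : WithOne S := θ p with hαdef
    set β : WithOne S := θ q with hβdef
    set f : WithOne S := x * (v₁ : WithOne S) with hfdef
    have hfx : f * x = x := by
      rw [hfdef, ← hv₀, ← WithOne.coe_mul, ← WithOne.coe_mul, hv₁]
    have hstabR : ∃ δ₂, (α * y) * β * δ₂ = α * y := by
      apply stabR
      refine ⟨α * γ, δ, ?_⟩
      calc α * y = α * (γ * x * δ) := by rw [hγδ]
      _ = α * γ * (α * y * β) * δ := by rw [hx]; simp only [mul_assoc]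
    obtain ⟨δ₂, hδ₂⟩ := hstabR
    have hxδ₂ : x * δ₂ = α * y := by
      calc x * δ₂ = α * y * β * δ₂ := by rw [hx]
      _ = α * y := hδ₂
    have hstabL : ∃ l, l * (α * y) = y := by
      apply stabL
      refine ⟨γ, β * δ, ?_⟩
      calc y = γ * x * δ := hγδ
      _ = γ * (α * y) * (β * δ) := by rw [hx]; simp only [mul_assoc]
    obtain ⟨l, hl⟩ := hstabL
    set cc : WithOne S := β * (v₁ : WithOne S) with hccdef
    have hfexp : f = (α * y) * cc := by
      rw [hfdef, hccdef, hx]; simp only [mul_assoc]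
    have hyc : y * cc = l * f := by
      conv_lhs => rw [← hl]
      rw [hfexp]; simp only [mul_assoc]
    have hret : y * (cc * (x * δ₂)) = y := by
      calc y * (cc * (x * δ₂)) = (y * cc) * (x * δ₂) := by simp only [mul_assoc]
      _ = (l * f) * (x * δ₂) := by rw [hyc]
      _ = l * ((f * x) * δ₂) := by simp only [mul_assoc]
      _ = l * (x * δ₂) := by rw [hfx]
      _ = l * (α * y) := by rw [hxδ₂]
      _ = y := hl
    obtain ⟨gc, hgc⟩ := lift_ex θ hgen cc
    obtain ⟨gd, hgd⟩ := lift_ex θ hgen δ₂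
    refine ⟨w * gc, gd, ?_⟩
    have hθrest : θ (gc * (p * w * q * gd)) = cc * (x * δ₂) := by
      rw [map_mul, map_mul, hgc, hgd, ← hθ]
    have hW1 : KRrel θ w (w * (gc * (p * w * q * gd))) := by
      refine Or.inr ⟨hw1, ?_, ?_, ?_⟩
      · intro hcon
        exact hw1 (fm_mul_eq_one hcon).1
      · rw [map_mul, hθrest, hret]
      · have hnil : transEdgesFrom θ (θ w)
            (FreeMonoid.toList (gc * (p * w * q * gd))) = [] := by
          apply TEF_eq_nil_of_leR θ hgen
          rw [FreeMonoid.ofList_toList, hθrest]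
          exact ⟨1, by rw [mul_one, hret]⟩
        rw [tE_mul, hnil, List.append_nil]
    have hW2 : w * (gc * (p * w * q * gd)) = (w * gc) * (p * w * q) * gd := by
      simp only [mul_assoc]
    rw [hW2] at hW1
    have hrepl : KRrel θ ((w * gc) * (p * w * q) * gd) ((w * gc) * v * gd) :=
      KRrel_mul θ hgen (w * gc) gd (KRrel_symm θ (Or.inr ⟨hv1, hpwq1, hθ, hE⟩))
    exact KRrel_trans θ hW1 hrepl

theorem ltJT_theta
    (hgen : ∀ s : S, ∃ u : FreeMonoid A, θ u = (s : WithOne S))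
    (hproper : ∀ u : FreeMonoid A, θ u = 1 → u = 1)
    (hreg : ∀ s : S, ∃ t : S, s * t * s = s)
    {v w : FreeMonoid A} (h : ltJT θ v w) : ltJ (θ v) (θ w) :=
  ⟨leJT_theta θ h.1, fun hcon => h.2 (leJT_flip θ hgen hproper hreg h.1 hcon)⟩

theorem TSet_le
    (hgen : ∀ s : S, ∃ u : FreeMonoid A, θ u = (s : WithOne S))
    (hproper : ∀ u : FreeMonoid A, θ u = 1 → u = 1)
    (hreg : ∀ s : S, ∃ t : S, s * t * s = s)
    {u : FreeMonoid A} {k : ℕ}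
    (hk : ∃ c : ℕ → FreeMonoid A, KRrel θ (c k) u ∧ ∀ i < k, ltJT θ (c (i + 1)) (c i)) :
    k ≤ height (θ u) := by
  obtain ⟨c, hck, hc⟩ := hk
  apply le_height
  exact ⟨fun i => θ (c i), KRrel_theta θ hck,
    fun i hi => ltJT_theta θ hgen hproper hreg (hc i hi)⟩

theorem mem_TSet_of_height
    (hgen : ∀ s : S, ∃ u : FreeMonoid A, θ u = (s : WithOne S))
    (hproper : ∀ u : FreeMonoid A, θ u = 1 → u = 1)
    (hreg : ∀ s : S, ∃ t : S, s * t * s = s) :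
    ∀ (h : ℕ) (u : FreeMonoid A), height (θ u) = h →
      ∃ c : ℕ → FreeMonoid A, KRrel θ (c h) u ∧ ∀ i < h, ltJT θ (c (i + 1)) (c i) := by
  intro h
  induction h using Nat.strong_induction_on with
  | _ h IH =>
  intro u hu
  by_cases h0 : h = 0
  · subst h0
    exact ⟨fun _ => u, KRrel_refl θ u, by omega⟩
  by_cases hone : h = 1
  · subst hone
    have hune : u ≠ 1 := by
      intro hcon
      rw [hcon, map_one, height_one_eq] at hu
      omega
    refine ⟨fun i => if i = 0 then 1 else u, ?_, ?_⟩
    · have e1 : (fun i => if i = 0 then (1 : FreeMonoid A) else u) 1 = u := by norm_num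
      rw [e1]
      exact KRrel_refl θ u
    · intro i hi
      have hi0 : i = 0 := by omega
      subst hi0
      have e1 : (fun i => if i = 0 then (1 : FreeMonoid A) else u) (0 + 1) = u := by norm_num
      have e0 : (fun i => if i = 0 then (1 : FreeMonoid A) else u) 0 = 1 := by norm_num
      rw [e1, e0]
      constructor
      · exact ⟨u, 1, by rw [mul_one, mul_one]; exact KRrel_refl θ u⟩
      · rintro ⟨p, q, hpq⟩
        rcases hpq with ⟨_, hpq1⟩ | ⟨h1ne, _, _, _⟩
        · exact hune (fm_mul_eq_one (fm_mul_eq_one hpq1).1).2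
        · exact h1ne rfl
  -- now h ≥ 2
  have h2 : 2 ≤ h := by omega
  have hu1 : θ u ≠ 1 := by
    intro hcon; rw [hcon, height_one_eq] at hu; omega
  have hune : u ≠ 1 := fun hcon => hu1 (by rw [hcon, map_one])
  have hmem := height_mem (θ u)
  rw [hu] at hmem
  obtain ⟨cS, hcSk, hcS⟩ := hmem
  set t : WithOne S := cS (h - 1) with htdef
  have htlt : ltJ (θ u) t := by
    have hstep := hcS (h - 1) (by omega)
    rw [show h - 1 + 1 = h by omega, hcSk] at hstep
    exact hstep
  have hth1 : h - 1 ≤ height t :=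
    le_height ⟨cS, htdef.symm, fun i hi => hcS i (by omega)⟩
  have hth2 : height t + 1 ≤ h := by
    have hx := ltJ_height htlt
    rw [hu] at hx
    omega
  have hth : height t = h - 1 := by omega
  have ht1 : t ≠ 1 := by
    intro hcon; rw [hcon, height_one_eq] at hth; omega
  obtain ⟨t₀, ht₀⟩ := WithOne.ne_one_iff_exists.mp ht1
  obtain ⟨t₁, ht₁⟩ := hreg t₀
  set e : WithOne S := (t₀ : WithOne S) * (t₁ : WithOne S) with hedef
  have het : e * t = t := by
    rw [hedef, ← ht₀, ← WithOne.coe_mul, ← WithOne.coe_mul, ht₁]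
  have heJt : leJ e t := ⟨1, (t₁ : WithOne S), by rw [one_mul, ← ht₀]⟩
  have htJe : leJ t e := ⟨1, t, by rw [one_mul, het]⟩
  have hhe : height e = h - 1 := by rw [height_eq_of_J heJt htJe]; exact hth
  have he1 : e ≠ 1 := by
    rw [hedef, ← WithOne.coe_mul]
    exact WithOne.coe_ne_one
  obtain ⟨a₀, ha₀⟩ := WithOne.ne_one_iff_exists.mp hu1
  obtain ⟨a₁, ha₁⟩ := hreg a₀
  obtain ⟨γ, δ, hγδ⟩ := htlt.1
  have hkey : θ u * ((a₁ : WithOne S) * γ * (e * (t * δ))) = θ u := by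
    have hh1 : e * (t * δ) = t * δ := by rw [← mul_assoc, het]
    rw [hh1]
    calc θ u * ((a₁ : WithOne S) * γ * (t * δ))
        = θ u * (a₁ : WithOne S) * (γ * t * δ) := by simp only [mul_assoc]
    _ = θ u * (a₁ : WithOne S) * θ u := by rw [← hγδ]
    _ = θ u := by rw [← ha₀, ← WithOne.coe_mul, ← WithOne.coe_mul, ha₁]
  obtain ⟨gx, hgx⟩ := lift_ex θ hgen ((a₁ : WithOne S) * γ)
  obtain ⟨gw, hgw⟩ := lift_ex θ hgen e
  obtain ⟨gy, hgy⟩ := lift_ex θ hgen (t * δ)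
  have hθrest : θ (gx * (gw * gy)) = (a₁ : WithOne S) * γ * (e * (t * δ)) := by
    rw [map_mul, map_mul, hgx, hgw, hgy]
  have hKRu : KRrel θ u (u * gx * gw * gy) := by
    refine Or.inr ⟨hune, ?_, ?_, ?_⟩
    · intro hcon
      exact hune (fm_mul_eq_one (fm_mul_eq_one (fm_mul_eq_one hcon).1).1).1
    · have hw3 : u * gx * gw * gy = u * (gx * (gw * gy)) := by simp only [mul_assoc]
      rw [hw3, map_mul, hθrest, hkey]
    · have hw3 : u * gx * gw * gy = u * (gx * (gw * gy)) := by simp only [mul_assoc]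
      rw [hw3, tE_mul]
      have hnil : transEdgesFrom θ (θ u) (FreeMonoid.toList (gx * (gw * gy))) = [] := by
        apply TEF_eq_nil_of_leR θ hgen
        rw [FreeMonoid.ofList_toList, hθrest]
        exact ⟨1, by rw [mul_one, hkey]⟩
      rw [hnil, List.append_nil]
  have hIH := IH (h - 1) (by omega) gw (by rw [hgw]; exact hhe)
  obtain ⟨cT, hcTk, hcT⟩ := hIH
  refine ⟨fun i => if i = h then u else cT i, ?_, ?_⟩
  · simp only [if_pos rfl]
    exact KRrel_refl θ u
  · intro i hi
    by_cases hih : i + 1 = h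
    · have hi' : i ≠ h := by omega
      have hieq : i = h - 1 := by omega
      simp only [if_pos hih, if_neg hi']
      constructor
      · refine ⟨u * gx, gy, ?_⟩
        have hsym : KRrel θ gw (cT i) := by
          rw [hieq]; exact KRrel_symm θ hcTk
        exact KRrel_trans θ hKRu (KRrel_mul θ hgen (u * gx) gy hsym)
      · intro hcon
        have hθi : θ (cT i) = e := by
          rw [hieq, KRrel_theta θ hcTk, hgw]
        have hle : leJ (θ (cT i)) (θ u) := leJT_theta θ hcon
        rw [hθi] at hle
        have hx := height_le_of_leJ hle
        rw [hu, hhe] at hx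
        omega
    · have hi2 : i ≠ h := by omega
      simp only [if_neg hih, if_neg hi2]
      exact hcT i (by omega)

end Main

end KRHolonomy

open KRHolonomy in
/-- Let `S` be a finite regular semigroup generated by `A`,
`T¹ = KR_right(S,A)¹`, and `φ : T¹ → S¹` the canonical surmorphism.  For every `t ∈ T¹`,
the Dedekind height of `t` in `T¹` equals the Dedekind height of `φ(t)` in `S¹`. -/
theorem kr_height_eq_height {A S : Type*} [Finite A] [Semigroup S] [Finite S]
    (θ : FreeMonoid A →* WithOne S)
    (hgen : ∀ s : S, ∃ u : FreeMonoid A, θ u = (s : WithOne S))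
    (hproper : ∀ u : FreeMonoid A, θ u = 1 → u = 1)
    (hreg : ∀ s : S, ∃ t : S, s * t * s = s)
    (u : FreeMonoid A) :
    heightT θ u = height (θ u) := by
  classical
  have hb : ∀ k ∈ {k | ∃ c : ℕ → FreeMonoid A, KRrel θ (c k) u ∧
      ∀ i < k, ltJT θ (c (i + 1)) (c i)}, k ≤ height (θ u) :=
    fun _ hk => TSet_le θ hgen hproper hreg hk
  have hne : (0 : ℕ) ∈ {k | ∃ c : ℕ → FreeMonoid A, KRrel θ (c k) u ∧
      ∀ i < k, ltJT θ (c (i + 1)) (c i)} :=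
    ⟨fun _ => u, KRrel_refl θ u, by omega⟩
  unfold heightT
  apply le_antisymm
  · exact csSup_le ⟨0, hne⟩ hb
  · exact le_csSup ⟨height (θ u), hb⟩
      (mem_TSet_of_height θ hgen hproper hreg (height (θ u)) u rfl)
end

section
/- Let T^1 = KR_right(S,A)^1 for a finite semigroup S generated by a finite alphabet A, and let D be the Lyndon–Chiswell length function on T^1. For all α, β, γ ∈ T^1, D(α, γ) ≥ min(D(α, β), D(β, γ)) (the isoperimetric inequality). -/
open scoped Classical

/-!
A transition edge `s → s·a` descends strictly in the `J`-order: by stability of the finite monoid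
`S¹`, `s ≤_J s·a` would force `s ≤_R s·a`, i.e. a path back to `s`. Hence the heights of the
endpoints increase strictly along every sequence of transition edges. Outside the trivial cases,
`D` only depends on the two edge sequences, through the length `k` of their common prefix and
whether the next edges share an endpoint. Common prefix lengths are ultrametric,
`min (ξ(α,β), ξ(β,γ)) ≤ ξ(α,γ)` with equality when the two on the left differ, and since a longer
common prefix ends at a strictly higher endpoint, this inequality passes to `D`.
-/

namespace KRHolonomy

instance {S : Type*} [Finite S] : Finite (WithOne S) := inferInstanceAs (Finite (Option S))

section GreenOrders

variable {M : Type*} [Monoid M] {a b c : M}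

theorem leJ.trans (hab : leJ a b) (hbc : leJ b c) : leJ a c := by
  obtain ⟨x, y, rfl⟩ := hab
  obtain ⟨x', y', rfl⟩ := hbc
  exact ⟨x * x', y' * y, by simp only [mul_assoc]⟩

theorem leR.refl (a : M) : leR a a := ⟨1, (mul_one a).symm⟩

theorem leR.trans (hab : leR a b) (hbc : leR b c) : leR a c := by
  obtain ⟨x, rfl⟩ := hab
  obtain ⟨y, rfl⟩ := hbc
  exact ⟨y * x, mul_assoc c y x⟩

theorem leR.leJ (h : leR a b) : leJ a b := by
  obtain ⟨x, rfl⟩ := h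
  exact ⟨1, x, by rw [one_mul]⟩

theorem ltJ.trans_leJ (hab : ltJ a b) (hbc : leJ b c) : ltJ a c :=
  ⟨hab.1.trans hbc, fun hca => hab.2 (hbc.trans hca)⟩

theorem ltJ.trans (hab : ltJ a b) (hbc : ltJ b c) : ltJ a c := hab.trans_leJ hbc.1

theorem ltJ.irrefl (a : M) : ¬ ltJ a a := fun h => h.2 h.1

theorem leR_mul_of_leJ_mul [Finite M] {s c : M} (h : leJ s (s * c)) : leR s (s * c) := by
  obtain ⟨x, y, hs⟩ := h
  set z := c * y
  have hs' : s = x * s * z := by simpa only [z, mul_assoc] using hs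
  have hpow : ∀ n, s = x ^ n * s * z ^ n := by
    intro n
    induction n with
    | zero => simp
    | succ n ih =>
      calc s = x * (x ^ n * s * z ^ n) * z := by rw [← ih]; exact hs'
        _ = x ^ (n + 1) * s * z ^ (n + 1) := by rw [pow_succ' x, pow_succ z]; simp only [mul_assoc]
  -- the powers of `z` are eventually periodic, so `s = x ^ a * s * z ^ a` absorbs a period of `z`
  obtain ⟨a, b, hab, hz⟩ := Set.finite_univ.exists_lt_map_eq_of_forall_mem
    (f := fun n : ℕ => z ^ n) (fun _ => Set.mem_univ _)
  obtain ⟨p, rfl⟩ := Nat.exists_eq_add_of_lt hab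
  refine ⟨y * z ^ p, ?_⟩
  calc s = x ^ a * s * z ^ (a + p + 1) := hz ▸ hpow a
    _ = x ^ a * s * z ^ a * z ^ (p + 1) := by rw [mul_assoc _ _ (z ^ (p + 1)), ← pow_add, add_assoc]
    _ = s * c * (y * z ^ p) := by rw [← hpow a, pow_succ']; simp only [z, mul_assoc]

end GreenOrders

section Height

variable {M : Type*} [Monoid M]

theorem ltJ_of_chain {c : ℕ → M} {k : ℕ} (hc : ∀ i < k, ltJ (c (i + 1)) (c i)) {i j : ℕ}
    (hij : i < j) (hjk : j ≤ k) : ltJ (c j) (c i) := by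
  induction j with
  | zero => omega
  | succ j ih =>
    rcases (Nat.lt_succ_iff.mp hij).lt_or_eq with h | rfl
    · exact (hc j (by omega)).trans (ih h (by omega))
    · exact hc i (by omega)

def chainLengths (x : M) : Set ℕ := {k | ∃ c : ℕ → M, c k = x ∧ ∀ i < k, ltJ (c (i + 1)) (c i)}

theorem bddAbove_chainLengths [Finite M] (x : M) : BddAbove (chainLengths x) := by
  refine ⟨Nat.card M, ?_⟩
  rintro k ⟨c, -, hc⟩
  have hinj : Function.Injective fun i : Fin (k + 1) => c i := by
    intro i j (hij : c i = c j)
    by_contra hne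
    rcases Fin.lt_or_lt_of_ne hne with h | h <;>
      exact ltJ.irrefl _ (hij ▸ ltJ_of_chain hc h (by omega))
  exact (Nat.card_le_card_of_injective _ hinj).trans' (by simp)

theorem height_lt_height_of_ltJ [Finite M] {s t : M} (h : ltJ t s) : height s < height t := by
  obtain ⟨c, hcs, hc⟩ : height s ∈ chainLengths s :=
    Nat.sSup_mem ⟨0, fun _ => s, rfl, by omega⟩ (bddAbove_chainLengths s)
  refine le_csSup (bddAbove_chainLengths t) ⟨Function.update c (height s + 1) t, by simp, ?_⟩
  intro i hi
  rcases (Nat.lt_succ_iff.mp hi).lt_or_eq with hi | rfl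
  · rw [Function.update_of_ne (by omega), Function.update_of_ne (by omega)]
    exact hc i hi
  · rw [Function.update_self, Function.update_of_ne (by omega), hcs]
    exact h

end Height

section TransitionEdges

variable {A S : Type*} [Semigroup S] (θ : FreeMonoid A →* WithOne S)

theorem ltJ_of_isTransitionEdge [Finite S] (hθ : Function.Surjective θ) {s : WithOne S} {a : A}
    (h : IsTransitionEdge θ s a) : ltJ (s * θ (FreeMonoid.of a)) s := by
  refine ⟨⟨1, θ (FreeMonoid.of a), by rw [one_mul]⟩, fun hJ => h ?_⟩
  obtain ⟨y, hy⟩ := leR_mul_of_leJ_mul hJ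
  obtain ⟨w, rfl⟩ := hθ y
  exact ⟨w, hy.symm⟩

theorem of_mem_transEdgesFrom {s : WithOne S} {w : List A} {e : WithOne S × A}
    (he : e ∈ transEdgesFrom θ s w) : IsTransitionEdge θ e.1 e.2 ∧ leR e.1 s := by
  induction w generalizing s with
  | nil => simp [transEdgesFrom] at he
  | cons a w ih =>
    rw [transEdgesFrom, List.mem_append] at he
    rcases he with he | he
    · split_ifs at he with hs
      · rw [List.mem_singleton.mp he]
        exact ⟨hs, leR.refl s⟩
      · simp at he
    · obtain ⟨htr, hR⟩ := ih he
      exact ⟨htr, hR.trans ⟨θ (FreeMonoid.of a), rfl⟩⟩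

theorem pairwise_transEdgesFrom (s : WithOne S) (w : List A) :
    (transEdgesFrom θ s w).Pairwise fun e f => leR f.1 (edgeEnd θ e) := by
  induction w generalizing s with
  | nil => simp [transEdgesFrom]
  | cons a w ih =>
    rw [transEdgesFrom]
    split_ifs
    · exact List.pairwise_cons.mpr ⟨fun f hf => (of_mem_transEdgesFrom θ hf).2, ih _⟩
    · exact ih _

theorem pairwise_height_transEdges [Finite S] (hθ : Function.Surjective θ) (u : FreeMonoid A) :
    (transEdges θ u).Pairwise fun e f => height (edgeEnd θ e) < height (edgeEnd θ f) := by
  refine (pairwise_transEdgesFrom θ 1 u.toList).imp_of_mem fun _ hf hR => ?_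
  exact height_lt_height_of_ltJ
    ((ltJ_of_isTransitionEdge θ hθ (of_mem_transEdgesFrom θ hf).1).trans_leJ hR.leJ)

end TransitionEdges

section CommonPrefix

variable {E : Type*} {L M N : List E} {i j : ℕ}

noncomputable def commonPrefixLen (L M : List E) : ℕ :=
  sSup {i | i ≤ L.length ∧ L.take i = M.take i}

theorem le_commonPrefixLen_iff :
    i ≤ commonPrefixLen L M ↔ i ≤ L.length ∧ L.take i = M.take i := by
  have hbdd : BddAbove {i | i ≤ L.length ∧ L.take i = M.take i} := ⟨L.length, fun _ h => h.1⟩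
  refine ⟨fun hi => ?_, fun hi => le_csSup hbdd hi⟩
  obtain ⟨hlen, htake⟩ := Nat.sSup_mem ⟨0, by simp⟩ hbdd
  rw [commonPrefixLen] at hi
  refine ⟨hi.trans hlen, ?_⟩
  simpa only [List.take_take, min_eq_left hi] using congrArg (List.take i) htake

theorem le_length_of_take_eq (hi : i ≤ L.length) (h : L.take i = M.take i) : i ≤ M.length := by
  have := congrArg List.length h
  simp only [List.length_take] at this
  omega

theorem commonPrefixLen_comm (L M : List E) : commonPrefixLen L M = commonPrefixLen M L := by
  refine le_antisymm_iff.mpr ⟨?_, ?_⟩ <;>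
  · refine le_commonPrefixLen_iff.mpr ?_
    obtain ⟨hlen, htake⟩ := le_commonPrefixLen_iff.mp le_rfl
    exact ⟨le_length_of_take_eq hlen htake, htake.symm⟩

theorem getElem?_eq_of_lt_commonPrefixLen (h : j < commonPrefixLen L M) : L[j]? = M[j]? := by
  have htake := (le_commonPrefixLen_iff.mp h).2
  simpa using congrArg (·[j]?) htake

theorem min_le_commonPrefixLen :
    min (commonPrefixLen L M) (commonPrefixLen M N) ≤ commonPrefixLen L N := by
  obtain ⟨hlen, hLM⟩ := le_commonPrefixLen_iff.mp (min_le_left _ (commonPrefixLen M N))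
  obtain ⟨-, hMN⟩ := le_commonPrefixLen_iff.mp (min_le_right (commonPrefixLen L M) _)
  exact le_commonPrefixLen_iff.mpr ⟨hlen, hLM.trans hMN⟩

theorem commonPrefixLen_eq_of_lt (h : commonPrefixLen L M < commonPrefixLen M N) :
    commonPrefixLen L N = commonPrefixLen L M := by
  refine le_antisymm (not_lt.mp fun hlt => ?_) (min_eq_left h.le ▸ min_le_commonPrefixLen)
  obtain ⟨hlen, hLN⟩ := le_commonPrefixLen_iff.mp (Nat.succ_le_of_lt hlt)
  obtain ⟨-, hMN⟩ := le_commonPrefixLen_iff.mp (Nat.succ_le_of_lt h)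
  exact (Nat.lt_irrefl _) (le_commonPrefixLen_iff.mpr ⟨hlen, hLN.trans hMN.symm⟩)

end CommonPrefix

section PrefixDist

variable {E X : Type*} (f : E → ℕ) (g : E → X) {L M N : List E} {k : ℕ}

theorem exists_getElem?_eq_some_of_commonPrefixLen_eq (hk : commonPrefixLen L M = k + 1) :
    ∃ e, L[k]? = some e ∧ M[k]? = some e :=
  have hkL : k < L.length := (le_commonPrefixLen_iff.mp hk.ge).1
  ⟨L[k], List.getElem?_eq_getElem hkL,
    (getElem?_eq_of_lt_commonPrefixLen (hk ▸ k.lt_succ_self)).symm.trans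
      (List.getElem?_eq_getElem hkL)⟩

def NextAgree (L M : List E) (k : ℕ) : Prop :=
  ∃ e e', L[k]? = some e ∧ M[k]? = some e' ∧ g e = g e'

variable {g} in
theorem NextAgree.symm (h : NextAgree g L M k) : NextAgree g M L k := by
  obtain ⟨e, e', he, he', hg⟩ := h
  exact ⟨e', e, he', he, hg.symm⟩

theorem nextAgree_comm : NextAgree g L M k ↔ NextAgree g M L k :=
  ⟨NextAgree.symm, NextAgree.symm⟩

variable {g} in
theorem NextAgree.trans (hLM : NextAgree g L M k) (hMN : NextAgree g M N k) :
    NextAgree g L N k := by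
  obtain ⟨e, e', he, he', hg⟩ := hLM
  obtain ⟨d, d', hd, hd', hg'⟩ := hMN
  obtain rfl : e' = d := Option.some_inj.mp (he'.symm.trans hd)
  exact ⟨e, d', he, hd', hg.trans hg'⟩

noncomputable def prefixDist (L M : List E) : ℕ :=
  if commonPrefixLen L M = 0 then 0
  else
    let k := commonPrefixLen L M
    let base := L[k - 1]?.elim 0 f
    if NextAgree g L M k then 2 * base else 2 * base - 1

theorem prefixDist_of_commonPrefixLen_eq_zero (h : commonPrefixLen L M = 0) :
    prefixDist f g L M = 0 := if_pos h

theorem prefixDist_of_getElem? {e : E} (hk : commonPrefixLen L M = k + 1) (he : L[k]? = some e) :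
    prefixDist f g L M = if NextAgree g L M (k + 1) then 2 * f e else 2 * f e - 1 := by
  simp only [prefixDist, hk, Nat.add_sub_cancel, he, Option.elim_some, Nat.add_one_ne_zero,
    if_false]

theorem two_mul_sub_one_le_prefixDist {e : E} (hk : commonPrefixLen L M = k + 1)
    (he : L[k]? = some e) : 2 * f e - 1 ≤ prefixDist f g L M := by
  rw [prefixDist_of_getElem? f g hk he]
  split_ifs <;> omega

theorem prefixDist_le_two_mul {e : E} (hk : commonPrefixLen L M = k + 1)
    (he : L[k]? = some e) : prefixDist f g L M ≤ 2 * f e := by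
  rw [prefixDist_of_getElem? f g hk he]
  split_ifs <;> omega

theorem prefixDist_le_of_forall_le {B : ℕ} (hf : ∀ e, f e ≤ B) (L M : List E) :
    prefixDist f g L M ≤ 2 * B := by
  cases hk : commonPrefixLen L M with
  | zero => simp only [prefixDist_of_commonPrefixLen_eq_zero f g hk, Nat.zero_le]
  | succ k =>
    obtain ⟨e, he, -⟩ := exists_getElem?_eq_some_of_commonPrefixLen_eq hk
    exact (prefixDist_le_two_mul f g hk he).trans (Nat.mul_le_mul_left 2 (hf e))

theorem prefixDist_comm (L M : List E) : prefixDist f g L M = prefixDist f g M L := by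
  cases hk : commonPrefixLen L M with
  | zero =>
    rw [prefixDist_of_commonPrefixLen_eq_zero f g hk,
      prefixDist_of_commonPrefixLen_eq_zero f g ((commonPrefixLen_comm M L).trans hk)]
  | succ k =>
    obtain ⟨e, he, he'⟩ := exists_getElem?_eq_some_of_commonPrefixLen_eq hk
    rw [prefixDist_of_getElem? f g hk he,
      prefixDist_of_getElem? f g ((commonPrefixLen_comm M L).trans hk) he']
    simp only [nextAgree_comm]

theorem prefixDist_eq_of_lt (h : commonPrefixLen L M < commonPrefixLen M N) :
    prefixDist f g L N = prefixDist f g L M := by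
  have hnext : NextAgree g L N (commonPrefixLen L M) ↔ NextAgree g L M (commonPrefixLen L M) := by
    simp only [NextAgree, getElem?_eq_of_lt_commonPrefixLen h]
  simp only [prefixDist, commonPrefixLen_eq_of_lt h, hnext]

theorem rel_of_pairwise_of_getElem? {R : E → E → Prop} (hL : L.Pairwise R) {i j : ℕ} {a b : E}
    (hij : i < j) (ha : L[i]? = some a) (hb : L[j]? = some b) : R a b := by
  obtain ⟨hi, rfl⟩ := List.getElem?_eq_some_iff.mp ha
  obtain ⟨hj, rfl⟩ := List.getElem?_eq_some_iff.mp hb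
  exact List.pairwise_iff_getElem.mp hL i j hi hj hij

theorem prefixDist_isoperimetric (hL : L.Pairwise (f · < f ·)) (hN : N.Pairwise (f · < f ·)) :
    min (prefixDist f g L M) (prefixDist f g M N) ≤ prefixDist f g L N := by
  wlog hle : commonPrefixLen L M ≤ commonPrefixLen M N generalizing L N
  · have := this hN hL (by rw [commonPrefixLen_comm N M, commonPrefixLen_comm M L]; omega)
    rwa [min_comm, prefixDist_comm f g N, prefixDist_comm f g M L, prefixDist_comm f g N L] at this
  obtain hlt | heq := hle.lt_or_eq
  · exact (min_le_left _ _).trans (prefixDist_eq_of_lt f g hlt).ge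
  cases hk : commonPrefixLen L M with
  | zero => simp only [prefixDist_of_commonPrefixLen_eq_zero f g hk, Nat.zero_le, inf_of_le_left]
  | succ k =>
    obtain ⟨e, he, he'⟩ := exists_getElem?_eq_some_of_commonPrefixLen_eq hk
    have hk' : commonPrefixLen M N = k + 1 := heq ▸ hk
    have hmin : k + 1 ≤ commonPrefixLen L N := by
      simpa only [hk, hk', min_self] using min_le_commonPrefixLen (L := L) (M := M) (N := N)
    obtain hLN | hLN := hmin.eq_or_lt
    · rw [prefixDist_of_getElem? f g hk he, prefixDist_of_getElem? f g hk' he',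
        prefixDist_of_getElem? f g hLN.symm he]
      by_cases hnext : NextAgree g L N (k + 1)
      · simp only [hnext, if_true]
        split_ifs <;> omega
      · rcases not_and_or.mp fun h : NextAgree g L M (k + 1) ∧ NextAgree g M N (k + 1) =>
          hnext (h.1.trans h.2) with h | h <;>
          simp only [h, hnext, if_false] <;> split_ifs <;> omega
    · -- the common prefix of `L` and `N` is longer, and heights increase along `L`
      have hk'' : commonPrefixLen L N = commonPrefixLen L N - 1 + 1 := by omega
      obtain ⟨d, hd, -⟩ := exists_getElem?_eq_some_of_commonPrefixLen_eq hk''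
      have hed : f e < f d := rel_of_pairwise_of_getElem? hL (by omega) he hd
      have hDLM := prefixDist_le_two_mul f g hk he
      have hDLN := two_mul_sub_one_le_prefixDist f g hk'' hd
      omega

end PrefixDist

section LyndonChiswell

variable {A S : Type*} [Semigroup S] (θ : FreeMonoid A →* WithOne S) {u v w : FreeMonoid A}

theorem lcD_eq_ite (u v : FreeMonoid A) :
    lcD θ u v = if KRrel θ u v then ell S else
      prefixDist (fun e => height (edgeEnd θ e)) (edgeEnd θ) (transEdges θ u) (transEdges θ v) :=
  rfl

theorem KRrel.symm (h : KRrel θ u v) : KRrel θ v u := by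
  rcases h with ⟨hu, hv⟩ | ⟨hu, hv, hθ, ht⟩
  · exact Or.inl ⟨hv, hu⟩
  · exact Or.inr ⟨hv, hu, hθ.symm, ht.symm⟩

theorem KRrel.congr_left (h : KRrel θ u v) : KRrel θ u w ↔ KRrel θ v w := by
  rcases h with ⟨rfl, rfl⟩ | ⟨hu, hv, hθ, ht⟩
  · rfl
  · simp only [KRrel, hθ, ht, hu, hv, false_and, false_or, ne_eq, not_false_eq_true, true_and]

theorem transEdges_eq_of_KRrel (h : KRrel θ u v) : transEdges θ u = transEdges θ v := by
  rcases h with ⟨rfl, rfl⟩ | ⟨-, -, -, ht⟩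
  exacts [rfl, ht]

theorem lcD_comm (u v : FreeMonoid A) : lcD θ u v = lcD θ v u := by
  rw [lcD_eq_ite, lcD_eq_ite, prefixDist_comm]
  exact if_congr ⟨KRrel.symm θ, KRrel.symm θ⟩ rfl rfl

theorem lcD_congr_left (h : KRrel θ u v) (w : FreeMonoid A) : lcD θ u w = lcD θ v w := by
  rw [lcD_eq_ite, lcD_eq_ite, transEdges_eq_of_KRrel θ h]
  exact if_congr (h.congr_left θ) rfl rfl

theorem lcD_congr_right (h : KRrel θ v w) (u : FreeMonoid A) : lcD θ u v = lcD θ u w := by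
  rw [lcD_comm, lcD_congr_left θ h, lcD_comm]

theorem lcD_le_ell [Finite S] (u v : FreeMonoid A) : lcD θ u v ≤ ell S := by
  rw [lcD_eq_ite]
  split_ifs
  · exact le_rfl
  · exact prefixDist_le_of_forall_le _ _
      (fun e => le_csSup (Set.finite_range _).bddAbove ⟨edgeEnd θ e, rfl⟩) _ _

end LyndonChiswell

end KRHolonomy

open KRHolonomy in
theorem lcD_isoperimetric_general {A S : Type*} [Semigroup S] [Finite S]
    (θ : FreeMonoid A →* WithOne S)
    (hgen : ∀ s : S, ∃ u : FreeMonoid A, θ u = (s : WithOne S))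
    (α β γ : FreeMonoid A) :
    lcD θ α γ ≥ min (lcD θ α β) (lcD θ β γ) := by
  have hθ : Function.Surjective θ := fun x => WithOne.recOneCoe ⟨1, map_one θ⟩ hgen x
  by_cases hab : KRrel θ α β
  · rw [lcD_congr_left θ hab]
    exact min_le_right _ _
  by_cases hbc : KRrel θ β γ
  · rw [← lcD_congr_right θ hbc]
    exact min_le_left _ _
  by_cases hac : KRrel θ α γ
  · rw [lcD_eq_ite, if_pos hac]
    exact (min_le_left _ _).trans (lcD_le_ell θ α β)
  simp only [lcD_eq_ite, if_neg hab, if_neg hbc, if_neg hac]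
  exact prefixDist_isoperimetric _ _ (pairwise_height_transEdges θ hθ α)
    (pairwise_height_transEdges θ hθ γ)

open KRHolonomy in
/-- **isoperimetric inequality.** For all `α, β, γ ∈ T¹ = KR_right(S,A)¹`,
`D(α, γ) ≥ min(D(α, β), D(β, γ))`. -/
theorem lcD_isoperimetric {A S : Type*} [Finite A] [Semigroup S] [Finite S]
    (θ : FreeMonoid A →* WithOne S)
    (hgen : ∀ s : S, ∃ u : FreeMonoid A, θ u = (s : WithOne S))
    (hproper : ∀ u : FreeMonoid A, θ u = 1 → u = 1)
    (α β γ : FreeMonoid A) :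
    lcD θ α γ ≥ min (lcD θ α β) (lcD θ β γ) :=
  lcD_isoperimetric_general θ hgen α β γ
end
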